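/- arXiv:2210.13145 — 3 statements merged into one kernel-verified Lean document; each statement's English description precedes it below -/
import Mathlib

section
/- Let 0 < r̲ < r̄ < ∞. There exists a constant c > 0, depending only on r̲ and r̄, such that for every r with r̲ < r < r̄ and every ρ > 0 with ρ ∉ (r̲/2, 2r̄), one has H(ρ) − H(r) − H'(r)(ρ − r) > c |ρ − r|. -/
/-- The relative pressure potential `ρ ↦ H(ρ) − H(r) − H'(r)(ρ − r)` with
`H(ρ) = ρ ln ρ`, so `H'(r) = ln r + 1`. -/
noncomputable def relH (r ρ : ℝ) : ℝ :=
  ρ * Real.log ρ - r * Real.log r - (Real.log r + 1) * (ρ - r)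

open Real

/-- The universal constant `(1 - log 2)/2`. -/
noncomputable def ccH : ℝ := (1 - Real.log 2) / 2

lemma log2_lt_one : Real.log 2 < 1 := by
  have := Real.add_one_le_exp (1 : ℝ)
  have h2 : (2 : ℝ) < Real.exp 1 := by
    have := Real.exp_one_gt_d9; linarith
  calc Real.log 2 < Real.log (Real.exp 1) := Real.log_lt_log (by norm_num) h2
    _ = 1 := Real.log_exp 1

lemma ccH_pos : 0 < ccH := by
  have := log2_lt_one; unfold ccH; linarith

lemma ccH_lt_log2 : ccH < Real.log 2 := by
  have := Real.log_two_gt_d9; unfold ccH; linarith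

lemma ccH_lt : ccH < 2 * Real.log 2 - 1 := by
  have := Real.log_two_gt_d9; unfold ccH; linarith

/-- Small side: for `0 < y < 1/2`, `y log y + (1-c)(1-y) > c/2`. -/
lemma small_side {y : ℝ} (hy0 : 0 < y) (hy : y < 1/2) :
    ccH / 2 < y * Real.log y + (1 - ccH) * (1 - y) := by
  set ψ : ℝ → ℝ := fun t => t * Real.log t + (1 - ccH) * (1 - t) with hψ
  have hanti : StrictAntiOn ψ (Set.Ioc 0 (1/2 : ℝ)) := by
    apply strictAntiOn_of_deriv_neg (convex_Ioc _ _)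
    · exact (Real.continuous_mul_log.add (by fun_prop)).continuousOn
    · intro x hx
      rw [interior_Ioc] at hx
      have hx0 : x ≠ 0 := ne_of_gt hx.1
      have hd : HasDerivAt ψ (Real.log x + 1 + (1 - ccH) * (-1)) x :=
        (Real.hasDerivAt_mul_log hx0).add
          (((hasDerivAt_id x).const_sub 1).const_mul (1 - ccH))
      rw [hd.deriv]
      have hlx : Real.log x < Real.log (1/2) := Real.log_lt_log hx.1 hx.2
      rw [show (1:ℝ)/2 = 2⁻¹ by norm_num, Real.log_inv] at hlx
      have := ccH_lt_log2
      linarith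
  have h := hanti (Set.mem_Ioc.mpr ⟨hy0, le_of_lt hy⟩)
      (Set.mem_Ioc.mpr ⟨by norm_num, le_refl _⟩) hy
  have hval : ψ (1/2) = ccH / 2 := by
    have : Real.log (1/2 : ℝ) = -Real.log 2 := by
      rw [show (1:ℝ)/2 = 2⁻¹ by norm_num, Real.log_inv]
    simp only [hψ, this]
    unfold ccH; ring
  rw [hval] at h
  exact h

/-- Big side: for `y > 2`, `y log y - (1+c)(y-1) > 2 log 2 - 1 - c`. -/
lemma big_side {y : ℝ} (hy : 2 < y) :
    2 * Real.log 2 - (1 + ccH) < y * Real.log y - (1 + ccH) * (y - 1) := by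
  set φ : ℝ → ℝ := fun t => t * Real.log t - (1 + ccH) * (t - 1) with hφ
  have hmono : StrictMonoOn φ (Set.Ici (2 : ℝ)) := by
    apply strictMonoOn_of_deriv_pos (convex_Ici _)
    · exact (Real.continuous_mul_log.sub (by fun_prop)).continuousOn
    · intro x hx
      rw [interior_Ici] at hx
      have hx0 : x ≠ 0 := (lt_trans two_pos hx).ne'
      have hd : HasDerivAt φ (Real.log x + 1 - (1 + ccH) * 1) x :=
        (Real.hasDerivAt_mul_log hx0).sub
          (((hasDerivAt_id x).sub_const 1).const_mul (1 + ccH))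
      rw [hd.deriv]
      have hlx : Real.log 2 < Real.log x := Real.log_lt_log (by norm_num) hx
      have := ccH_lt_log2
      linarith
  have h := hmono (Set.mem_Ici.mpr le_rfl) (Set.mem_Ici.mpr (le_of_lt hy)) hy
  have hval : φ 2 = 2 * Real.log 2 - (1 + ccH) := by norm_num [hφ]
  rw [hval] at h
  exact h

/-- For `0 < r̲ < r̄ < ∞` there is `c > 0` (depending only on `r̲`, `r̄`) such that
for every `r ∈ (r̲, r̄)` and every `ρ > 0` with `ρ ∉ (r̲/2, 2r̄)`,
`H(ρ) − H(r) − H'(r)(ρ − r) > c |ρ − r|`. -/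
theorem stmt2 (rlow rhigh : ℝ) (h0 : 0 < rlow) (h1 : rlow < rhigh) :
    ∃ c > 0, ∀ r : ℝ, rlow < r → r < rhigh →
      ∀ ρ : ℝ, 0 < ρ → ρ ∉ Set.Ioo (rlow / 2) (2 * rhigh) →
        c * |ρ - r| < relH r ρ := by
  refine ⟨ccH, ccH_pos, ?_⟩
  intro r hr1 hr2 ρ hρ hρnot
  have hr0 : 0 < r := h0.trans hr1
  set y : ℝ := ρ / r with hy
  have hy0 : 0 < y := div_pos hρ hr0
  have hρy : ρ = r * y := by rw [hy]; field_simp [hr0.ne']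
  have hlog : Real.log y = Real.log ρ - Real.log r := Real.log_div hρ.ne' hr0.ne'
  have hrel : relH r ρ = r * (y * Real.log y) - r * (y - 1) := by
    unfold relH
    rw [hlog, hρy]; ring
  rw [Set.mem_Ioo, not_and_or, not_lt, not_lt] at hρnot
  rcases hρnot with hc | hc
  · -- small side: ρ ≤ rlow/2
    have hρr : ρ < r := by linarith
    have habs : |ρ - r| = r - ρ := by rw [abs_of_neg (by linarith)]; ring
    have hyh : y < 1/2 := by
      rw [hy, div_lt_iff₀ hr0]
      nlinarith
    have hkey := small_side hy0 hyh
    rw [habs, hrel, hρy]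
    nlinarith [mul_lt_mul_of_pos_left hkey hr0, mul_pos hr0 ccH_pos]
  · -- big side: ρ ≥ 2 * rhigh
    have hρr : r < ρ := by linarith
    have habs : |ρ - r| = ρ - r := abs_of_pos (by linarith)
    have hyh : 2 < y := by
      rw [hy, lt_div_iff₀ hr0]
      nlinarith
    have hkey := big_side hyh
    have hc2 : 0 < 2 * Real.log 2 - (1 + ccH) := by have := ccH_lt; linarith
    rw [habs, hrel, hρy]
    nlinarith [mul_lt_mul_of_pos_left hkey hr0, mul_pos hr0 hc2]
end

section
/- Let P(z) = (e^z − z − 1)/z² for z ≠ 0 and P(0) = 0. There exists a constant C > 0 such that for all 3×3 real matrices U and V, (P(|U|)U − P(|V|)V) : (U − V) ≥ C |U − V|². -/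
/-- Frobenius inner product `A : B = Σ_{i,j} A_{ij} B_{ij}` of `3×3` real matrices. -/
noncomputable def fip (A B : Matrix (Fin 3) (Fin 3) ℝ) : ℝ := ∑ i, ∑ j, A i j * B i j

/-- Frobenius norm `|A| = (A : A)^{1/2}` of a `3×3` real matrix. -/
noncomputable def fnorm (A : Matrix (Fin 3) (Fin 3) ℝ) : ℝ := Real.sqrt (fip A A)


/-- `P(z) = M(z)/z² = (e^z − z − 1)/z²` for `z ≠ 0`, `P(0) = 0`. -/
noncomputable def Pfun (z : ℝ) : ℝ :=
  if z = 0 then 0 else (Real.exp z - z - 1) / z ^ 2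

lemma fip_nonneg (A : Matrix (Fin 3) (Fin 3) ℝ) : 0 ≤ fip A A :=
  Finset.sum_nonneg fun _ _ => Finset.sum_nonneg fun _ _ => mul_self_nonneg _

lemma fnorm_sq (A : Matrix (Fin 3) (Fin 3) ℝ) : fnorm A ^ 2 = fip A A :=
  Real.sq_sqrt (fip_nonneg A)

lemma fnorm_eq_zero {A : Matrix (Fin 3) (Fin 3) ℝ} (h : fnorm A = 0) : A = 0 := by
  have h2 : fip A A = 0 := by
    have := fnorm_sq A
    rw [h] at this
    simpa using this.symm
  have hnn : ∀ i ∈ (Finset.univ : Finset (Fin 3)), 0 ≤ ∑ j, A i j * A i j :=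
    fun i _ => Finset.sum_nonneg fun _ _ => mul_self_nonneg _
  ext i j
  have hi := (Finset.sum_eq_zero_iff_of_nonneg hnn).1 h2 i (Finset.mem_univ i)
  have hj := (Finset.sum_eq_zero_iff_of_nonneg
    (fun j _ => mul_self_nonneg (A i j))).1 hi j (Finset.mem_univ j)
  have : A i j = 0 := by nlinarith [hj]
  simpa using this

lemma fip_cs (A B : Matrix (Fin 3) (Fin 3) ℝ) : fip A B ≤ fnorm A * fnorm B := by
  have hA : fip A A = ∑ p : Fin 3 × Fin 3, (A p.1 p.2) ^ 2 := by
    rw [fip, Fintype.sum_prod_type (f := fun p : Fin 3 × Fin 3 => (A p.1 p.2) ^ 2)]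
    exact Finset.sum_congr rfl fun i _ => Finset.sum_congr rfl fun j _ => (sq (A i j)).symm
  have hB : fip B B = ∑ p : Fin 3 × Fin 3, (B p.1 p.2) ^ 2 := by
    rw [fip, Fintype.sum_prod_type (f := fun p : Fin 3 × Fin 3 => (B p.1 p.2) ^ 2)]
    exact Finset.sum_congr rfl fun i _ => Finset.sum_congr rfl fun j _ => (sq (B i j)).symm
  have hAB : fip A B = ∑ p : Fin 3 × Fin 3, A p.1 p.2 * B p.1 p.2 := by
    rw [fip, Fintype.sum_prod_type (f := fun p : Fin 3 × Fin 3 => A p.1 p.2 * B p.1 p.2)]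
  have key := Finset.sum_mul_sq_le_sq_mul_sq Finset.univ
    (fun p : Fin 3 × Fin 3 => A p.1 p.2) (fun p : Fin 3 × Fin 3 => B p.1 p.2)
  have key2 : (fip A B) ^ 2 ≤ fip A A * fip B B := by
    rw [hA, hB, hAB]; exact key
  calc fip A B ≤ |fip A B| := le_abs_self _
    _ = Real.sqrt ((fip A B) ^ 2) := (Real.sqrt_sq_eq_abs _).symm
    _ ≤ Real.sqrt (fip A A * fip B B) := Real.sqrt_le_sqrt key2
    _ = fnorm A * fnorm B := by
        rw [Real.sqrt_mul (fip_nonneg A)]; rfl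

lemma fip_expand (x y : ℝ) (U V : Matrix (Fin 3) (Fin 3) ℝ) :
    fip (x • U - y • V) (U - V) =
      x * fip U U - (x + y) * fip U V + y * fip V V := by
  simp only [fip, Matrix.sub_apply, Matrix.smul_apply, smul_eq_mul, Finset.mul_sum,
    ← Finset.sum_sub_distrib, ← Finset.sum_add_distrib]
  exact Finset.sum_congr rfl fun i _ => Finset.sum_congr rfl fun j _ => by ring

lemma fip_sub_sub (U V : Matrix (Fin 3) (Fin 3) ℝ) :
    fip (U - V) (U - V) = fip U U - 2 * fip U V + fip V V := by
  simp only [fip, Matrix.sub_apply, Finset.mul_sum,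
    ← Finset.sum_sub_distrib, ← Finset.sum_add_distrib]
  exact Finset.sum_congr rfl fun i _ => Finset.sum_congr rfl fun j _ => by ring

lemma exp_quad {t : ℝ} (ht : 0 ≤ t) : 1 + t + t ^ 2 / 4 ≤ Real.exp t := by
  have h := Real.add_one_le_exp (t / 2)
  have he : Real.exp t = Real.exp (t / 2) * Real.exp (t / 2) := by
    rw [← Real.exp_add]; ring_nf
  nlinarith [Real.exp_nonneg (t / 2)]

lemma Pfun_ge {t : ℝ} (ht : 0 < t) : 1 / 4 ≤ Pfun t := by
  rw [Pfun, if_neg ht.ne']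
  rw [le_div_iff₀ (by positivity)]
  nlinarith [exp_quad ht.le]

noncomputable def qfun (t : ℝ) : ℝ := (t - 1) * Real.exp t + 1 - t ^ 2 / 4

lemma qfun_hasDeriv (t : ℝ) : HasDerivAt qfun (t * Real.exp t - t / 2) t := by
  have h1 : HasDerivAt (fun s : ℝ => (s - 1) * Real.exp s)
      (1 * Real.exp t + (t - 1) * Real.exp t) t :=
    ((hasDerivAt_id t).sub_const 1).mul (Real.hasDerivAt_exp t)
  have h2 : HasDerivAt (fun s : ℝ => s ^ 2 / 4) (2 * t / 4) t := by
    have := (hasDerivAt_pow 2 t).div_const 4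
    simpa using this
  have := (h1.add_const 1).sub h2
  exact this.congr_deriv (by ring)

lemma qfun_nonneg {t : ℝ} (ht : 0 ≤ t) : 0 ≤ qfun t := by
  have hmono : MonotoneOn qfun (Set.Ici 0) := by
    apply monotoneOn_of_deriv_nonneg (convex_Ici 0)
    · exact fun s _ => ((qfun_hasDeriv s).continuousAt).continuousWithinAt
    · exact fun s _ => ((qfun_hasDeriv s).differentiableAt).differentiableWithinAt
    · intro s hs
      rw [interior_Ici] at hs
      rw [(qfun_hasDeriv s).deriv]
      have h1 : (1 : ℝ) ≤ Real.exp s := by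
        have := Real.add_one_le_exp s
        have hs' : (0 : ℝ) < s := hs
        linarith
      have hs' : (0 : ℝ) < s := hs
      nlinarith
  have h0 : qfun 0 = 0 := by simp [qfun]
  have := hmono (Set.self_mem_Ici) (Set.mem_Ici.2 ht) ht
  linarith [this]

noncomputable def gfun (t : ℝ) : ℝ := (Real.exp t - 1 - t) / t - t / 4

lemma gfun_hasDeriv {t : ℝ} (ht : t ≠ 0) : HasDerivAt gfun (qfun t / t ^ 2) t := by
  have hn : HasDerivAt (fun s : ℝ => Real.exp s - 1 - s) (Real.exp t - 1) t := by
    have := ((Real.hasDerivAt_exp t).sub_const 1).sub (hasDerivAt_id t)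
    exact this
  have hd : HasDerivAt (fun s : ℝ => (Real.exp s - 1 - s) / s)
      (((Real.exp t - 1) * t - (Real.exp t - 1 - t) * 1) / t ^ 2) t :=
    hn.div (hasDerivAt_id t) ht
  have h4 : HasDerivAt (fun s : ℝ => s / 4) (1 / 4) t := by
    simpa using (hasDerivAt_id t).div_const 4
  have := hd.sub h4
  refine this.congr_deriv ?_
  unfold qfun
  field_simp
  ring

lemma gfun_mono : MonotoneOn gfun (Set.Ioi 0) := by
  apply monotoneOn_of_deriv_nonneg (convex_Ioi 0)
  · exact fun s hs => ((gfun_hasDeriv (ne_of_gt hs)).continuousAt).continuousWithinAt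
  · intro s hs
    rw [interior_Ioi] at hs
    exact ((gfun_hasDeriv (ne_of_gt hs)).differentiableAt).differentiableWithinAt
  · intro s hs
    rw [interior_Ioi] at hs
    rw [(gfun_hasDeriv (ne_of_gt hs)).deriv]
    have := qfun_nonneg (le_of_lt hs)
    positivity

lemma gfun_eq {t : ℝ} (ht : 0 < t) : gfun t = t * (Pfun t - 1 / 4) := by
  rw [gfun, Pfun, if_neg ht.ne']
  field_simp
  ring

lemma gfun_key {a b : ℝ} (ha : 0 < a) (hb : 0 < b) :
    0 ≤ (a * (Pfun a - 1 / 4) - b * (Pfun b - 1 / 4)) * (a - b) := by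
  rw [← gfun_eq ha, ← gfun_eq hb]
  rcases le_total a b with h | h
  · have := gfun_mono (Set.mem_Ioi.2 ha) (Set.mem_Ioi.2 hb) h
    nlinarith
  · have := gfun_mono (Set.mem_Ioi.2 hb) (Set.mem_Ioi.2 ha) h
    nlinarith

/-- For `P(z) = (e^z − z − 1)/z²` (with `P(0) = 0`) there is a constant `C > 0`
such that for all `3×3` real matrices `U`, `V`,
`(P(|U|)U − P(|V|)V) : (U − V) ≥ C |U − V|²`. -/
theorem stmt6 :
    ∃ C > 0, ∀ U V : Matrix (Fin 3) (Fin 3) ℝ,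
      C * fnorm (U - V) ^ 2 ≤ fip (Pfun (fnorm U) • U - Pfun (fnorm V) • V) (U - V) := by
  refine ⟨1 / 4, by norm_num, fun U V => ?_⟩
  rw [fip_expand, fnorm_sq, fip_sub_sub]
  have haU : fip U U = fnorm U ^ 2 := (fnorm_sq U).symm
  have hbV : fip V V = fnorm V ^ 2 := (fnorm_sq V).symm
  have hs : fip U V ≤ fnorm U * fnorm V := fip_cs U V
  have haz : 0 ≤ fnorm U := Real.sqrt_nonneg _
  have hbz : 0 ≤ fnorm V := Real.sqrt_nonneg _
  rcases eq_or_lt_of_le haz with ha0 | ha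
  · -- U = 0
    have hU : U = 0 := fnorm_eq_zero ha0.symm
    subst hU
    have h0 : fip (0 : Matrix (Fin 3) (Fin 3) ℝ) 0 = 0 := by simp [fip]
    have h0V : fip (0 : Matrix (Fin 3) (Fin 3) ℝ) V = 0 := by simp [fip]
    rw [h0, h0V]
    rcases eq_or_lt_of_le hbz with hb0 | hb
    · have hV : V = 0 := fnorm_eq_zero hb0.symm
      subst hV
      simp [h0]
    · have hP := Pfun_ge hb
      rw [hbV]
      nlinarith [sq_nonneg (fnorm V)]
  · rcases eq_or_lt_of_le hbz with hb0 | hb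
    · -- V = 0
      have hV : V = 0 := fnorm_eq_zero hb0.symm
      subst hV
      have h0 : fip (0 : Matrix (Fin 3) (Fin 3) ℝ) 0 = 0 := by simp [fip]
      have hU0 : fip U (0 : Matrix (Fin 3) (Fin 3) ℝ) = 0 := by simp [fip]
      rw [h0, hU0]
      have hP := Pfun_ge ha
      rw [haU]
      nlinarith [sq_nonneg (fnorm U)]
    · -- main case
      have hPa := Pfun_ge ha
      have hPb := Pfun_ge hb
      have hkey := gfun_key ha hb
      have hcoef : 0 ≤ Pfun (fnorm U) + Pfun (fnorm V) - 1 / 2 := by linarith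
      have hmul : (Pfun (fnorm U) + Pfun (fnorm V) - 1 / 2) * fip U V ≤
          (Pfun (fnorm U) + Pfun (fnorm V) - 1 / 2) * (fnorm U * fnorm V) :=
        mul_le_mul_of_nonneg_left hs hcoef
      rw [haU, hbV]
      nlinarith [hkey, hmul]
end

section
/- Let P(z) = (e^z − z − 1)/z² for z ≠ 0 and P(0) = 0. There exists a constant C > 0 such that for all 3×3 real matrices U and V, (P(|U|)U − P(|V|)V) : (U − V) ≥ C |U − V|³; that is, P satisfies the strengthened monotonicity condition (P6) of the paper with exponent q = 3. -/
lemma summable_tail (x : ℝ) : Summable (fun n : ℕ => x ^ (n + 2) / (Nat.factorial (n + 2) : ℝ)) :=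
  ((summable_nat_add_iff 2).mpr (Real.summable_pow_div_factorial x))

/-- exp series identity: `e^x - x - 1 = ∑ x^(n+2)/(n+2)!`. -/
lemma exp_tail (x : ℝ) : Real.exp x - x - 1 = ∑' n : ℕ, x ^ (n + 2) / (Nat.factorial (n + 2) : ℝ) := by
  have hs := Real.summable_pow_div_factorial x
  have h : Real.exp x = ∑' n : ℕ, x ^ n / (n.factorial : ℝ) := by
    rw [Real.exp_eq_exp_ℝ, NormedSpace.exp_eq_tsum_div]
  have h2 := Summable.sum_add_tsum_nat_add' (f := fun n => x ^ n / (n.factorial : ℝ)) (k := 2)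
    (summable_tail x)
  rw [h, ← h2]
  simp [Finset.sum_range_succ]
  ring

/-- cubic lower bound `z^3/6 ≤ e^z - z - 1` for `z ≥ 0`. -/
lemma cubic_le (z : ℝ) (hz : 0 ≤ z) : z ^ 3 / 6 ≤ Real.exp z - z - 1 := by
  have h := Real.sum_le_exp_of_nonneg hz 4
  simp [Finset.sum_range_succ, Nat.factorial] at h
  nlinarith [h]

lemma Pfun_ge_s7 (z : ℝ) (hz : 0 ≤ z) : z / 6 ≤ Pfun z := by
  unfold Pfun
  rcases eq_or_lt_of_le hz with h | h
  · simp [← h]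
  · rw [if_neg h.ne']
    rw [le_div_iff₀ (by positivity)]
    have := cubic_le z hz
    nlinarith

lemma Pfun_nonneg (z : ℝ) (hz : 0 ≤ z) : 0 ≤ Pfun z :=
  le_trans (by positivity) (Pfun_ge_s7 z hz)

/-- monotonicity of `Pfun` on `[0,∞)`. -/
lemma Pfun_mono {v u : ℝ} (hv : 0 ≤ v) (hvu : v ≤ u) : Pfun v ≤ Pfun u := by
  rcases eq_or_lt_of_le hv with h | h
  · rw [← h]; simpa [Pfun] using Pfun_nonneg u (h ▸ hvu)
  · have hu : (0:ℝ) < u := lt_of_lt_of_le h hvu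
    unfold Pfun
    rw [if_neg h.ne', if_neg hu.ne']
    rw [div_le_div_iff₀ (by positivity) (by positivity)]
    rw [exp_tail, exp_tail, ← tsum_mul_right, ← tsum_mul_right]
    refine Summable.tsum_le_tsum (fun n => ?_) ((summable_tail v).mul_right _)
      ((summable_tail u).mul_right _)
    rw [div_mul_eq_mul_div, div_mul_eq_mul_div, div_le_div_iff₀ (by positivity) (by positivity)]
    have key : v ^ (n + 2) * u ^ 2 ≤ u ^ (n + 2) * v ^ 2 := by
      have h1 : v ^ n ≤ u ^ n := pow_le_pow_left₀ hv hvu n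
      have : v ^ (n + 2) * u ^ 2 = (u * v) ^ 2 * v ^ n := by ring
      rw [this]
      have : u ^ (n + 2) * v ^ 2 = (u * v) ^ 2 * u ^ n := by ring
      rw [this]
      exact mul_le_mul_of_nonneg_left h1 (by positivity)
    nlinarith [key]

section Abstract
variable {E : Type*} [NormedAddCommGroup E] [InnerProductSpace ℝ E]

lemma key_ineq (x y : E) :
    (1 / 12 : ℝ) * ‖x - y‖ ^ 3 ≤ inner ℝ (Pfun ‖x‖ • x - Pfun ‖y‖ • y) (x - y) := by
  set u := ‖x‖ with hu
  set v := ‖y‖ with hv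
  set d := ‖x - y‖ with hd
  set a := Pfun u with ha
  set b := Pfun v with hb
  have hu0 : 0 ≤ u := norm_nonneg x
  have hv0 : 0 ≤ v := norm_nonneg y
  have hd0 : 0 ≤ d := norm_nonneg _
  have hexp : (inner ℝ (a • x - b • y) (x - y) : ℝ) =
      a * u ^ 2 + b * v ^ 2 - (a + b) * inner ℝ x y := by
    simp [inner_sub_left, inner_sub_right, real_inner_smul_left,
      real_inner_self_eq_norm_sq, real_inner_comm y x]
    ring
  have hdsq : d ^ 2 = u ^ 2 - 2 * inner ℝ x y + v ^ 2 := norm_sub_sq_real x y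
  have htri : d ≤ u + v := norm_sub_le x y
  have hau : u / 6 ≤ a := Pfun_ge_s7 u hu0
  have hbv : v / 6 ≤ b := Pfun_ge_s7 v hv0
  have hmono : 0 ≤ (a - b) * (u ^ 2 - v ^ 2) := by
    rcases le_total v u with h | h
    · have := Pfun_mono hv0 h
      have h2 : v ^ 2 ≤ u ^ 2 := by nlinarith
      nlinarith
    · have := Pfun_mono hu0 h
      have h2 : u ^ 2 ≤ v ^ 2 := by nlinarith
      nlinarith
  rw [hexp]
  have hab : d / 6 ≤ a + b := by nlinarith
  nlinarith [sq_nonneg d, mul_le_mul_of_nonneg_right hab (sq_nonneg d)]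

end Abstract

/-- embedding of 3×3 matrices into Euclidean space. -/
noncomputable def emb (A : Matrix (Fin 3) (Fin 3) ℝ) : EuclideanSpace ℝ (Fin 3 × Fin 3) :=
  WithLp.toLp 2 fun p : Fin 3 × Fin 3 => A p.1 p.2

lemma fip_eq (A B : Matrix (Fin 3) (Fin 3) ℝ) : fip A B = inner ℝ (emb A) (emb B) := by
  simp [fip, emb, PiLp.inner_apply, RCLike.inner_apply, Fintype.sum_prod_type, mul_comm]

lemma fnorm_eq (A : Matrix (Fin 3) (Fin 3) ℝ) : fnorm A = ‖emb A‖ := by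
  rw [fnorm, fip_eq, real_inner_self_eq_norm_sq, Real.sqrt_sq (norm_nonneg _)]

/-- For `P(z) = (e^z − z − 1)/z²` (with `P(0) = 0`) there is a constant `C > 0`
such that for all `3×3` real matrices `U`, `V`,
`(P(|U|)U − P(|V|)V) : (U − V) ≥ C |U − V|³`; i.e. `P` satisfies the strengthened
monotonicity condition (P6) with exponent `q = 3`. -/
theorem stmt7 :
    ∃ C > 0, ∀ U V : Matrix (Fin 3) (Fin 3) ℝ,
      C * fnorm (U - V) ^ 3 ≤ fip (Pfun (fnorm U) • U - Pfun (fnorm V) • V) (U - V) := by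
  refine ⟨1 / 12, by norm_num, fun U V => ?_⟩
  have h1 : emb (U - V) = emb U - emb V := rfl
  have h2 : emb (Pfun (fnorm U) • U - Pfun (fnorm V) • V)
      = Pfun ‖emb U‖ • emb U - Pfun ‖emb V‖ • emb V := by
    rw [← fnorm_eq, ← fnorm_eq]; rfl
  rw [fnorm_eq, fip_eq, h1, h2]
  exact key_ineq (emb U) (emb V)
end
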